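/- Let f, g be n×n complex matrices. If exp(f) = exp(g) and the spectrum of f is 2iπ-congruence free, then fg = gf. -/

import Mathlib

/-!
Let `ad f = [f, ·]`. Conjugation by `exp f` is `exp (ad f)`, and `g` commutes with
`exp g = exp f`, so `exp (ad f) g = g`. Writing `exp z - 1 = z φ(z)` with the entire function
`φ(z) = (exp z - 1) / z`, this says that `φ(ad f)` kills `ad f g`. If `ad f g ≠ 0`, then `ad f`
has an eigenvector `X` in the kernel of `φ(ad f)`, whose eigenvalue `μ` satisfies `φ(μ) = 0`,
i.e. `μ ∈ 2πiℤ ∖ {0}`. But `f X = X (f + μ)` with `X ≠ 0` forces `f` and `f + μ` to share an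
eigenvalue (Cayley–Hamilton and spectral mapping), so `μ` is a difference of two eigenvalues
of `f`.
-/

open Matrix NormedSpace Complex

open scoped Nat

theorem ContinuousLinearMap.tsum_smul_pow_apply_eq {𝕜 𝔸 E : Type*} [NontriviallyNormedField 𝕜]
    [NormedRing 𝔸] [NormedAlgebra 𝕜 𝔸] [NormedAddCommGroup E] [NormedSpace 𝕜 E]
    (c : ℕ → 𝕜) {T : E →L[𝕜] E} {a : 𝔸} (ψ : 𝔸 →L[𝕜] E) {x : E} (hpow : ∀ k, (T ^ k) x = ψ (a ^ k))
    (hT : Summable fun k => c k • T ^ k) (ha : Summable fun k => c k • a ^ k) :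
    (∑' k, c k • T ^ k) x = ψ (∑' k, c k • a ^ k) := by
  rw [← ContinuousLinearMap.apply_apply x, (ContinuousLinearMap.apply 𝕜 E x).map_tsum hT,
    ψ.map_tsum ha]
  congr! 1 with k
  simp [hpow]

theorem ContinuousLinearMap.exp_apply_eq {𝕂 𝔸 E : Type*} [RCLike 𝕂] [NormedRing 𝔸]
    [NormedAlgebra 𝕂 𝔸] [CompleteSpace 𝔸] [NormedAddCommGroup E] [NormedSpace 𝕂 E]
    [CompleteSpace E] {T : E →L[𝕂] E} {a : 𝔸} (ψ : 𝔸 →L[𝕂] E) {x : E}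
    (hpow : ∀ k, (T ^ k) x = ψ (a ^ k)) :
    exp T x = ψ (exp a) := by
  simp only [exp_eq_tsum 𝕂]
  exact T.tsum_smul_pow_apply_eq _ ψ hpow (expSeries_summable' T) (expSeries_summable' a)

section Ad

variable {𝔸 : Type*} [NormedRing 𝔸] [NormedAlgebra ℂ 𝔸]

noncomputable def ContinuousLinearMap.ad (a : 𝔸) : 𝔸 →L[ℂ] 𝔸 :=
  ContinuousLinearMap.mul ℂ 𝔸 a - (ContinuousLinearMap.mul ℂ 𝔸).flip a

variable [CompleteSpace 𝔸]

theorem exp_mul_apply (a b : 𝔸) : exp (ContinuousLinearMap.mul ℂ 𝔸 a) b = exp a * b := by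
  refine ContinuousLinearMap.exp_apply_eq ((ContinuousLinearMap.mul ℂ 𝔸).flip b) fun k => ?_
  induction k with
  | zero => simp
  | succ k ih => simp [pow_succ', ih, mul_assoc]

theorem exp_mul_flip_apply (a b : 𝔸) :
    exp ((ContinuousLinearMap.mul ℂ 𝔸).flip a) b = b * exp a := by
  refine ContinuousLinearMap.exp_apply_eq (ContinuousLinearMap.mul ℂ 𝔸 b) fun k => ?_
  induction k with
  | zero => simp
  | succ k ih => simp [pow_succ', ih, mul_assoc, pow_mul_comm']

theorem exp_ad_apply (a b : 𝔸) : exp (ContinuousLinearMap.ad a) b = exp a * b * exp (-a) := by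
  let +nondep : NormedAlgebra ℚ (𝔸 →L[ℂ] 𝔸) := .restrictScalars ℚ ℂ _
  have hc : Commute (ContinuousLinearMap.mul ℂ 𝔸 a)
      ((ContinuousLinearMap.mul ℂ 𝔸).flip (-a)) := by
    ext
    simp [mul_assoc]
  rw [ContinuousLinearMap.ad, sub_eq_add_neg, ← map_neg, exp_add_of_commute hc,
    mul_apply_eq_comp, exp_mul_flip_apply, exp_mul_apply, mul_assoc]

end Ad

section ExpSubOneDiv

variable {𝔸 : Type*} [NormedRing 𝔸] [NormedAlgebra ℂ 𝔸]

/-- `(exp x - 1) / x`, as the everywhere convergent series `∑ xᵏ / (k + 1)!`. -/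
noncomputable def expSubOneDiv (x : 𝔸) : 𝔸 := ∑' k : ℕ, ((k + 1)! : ℂ)⁻¹ • x ^ k

theorem expSubOneDiv_zero : expSubOneDiv (0 : 𝔸) = 1 := by
  rw [expSubOneDiv, tsum_eq_single 0 fun k hk => by simp [zero_pow hk]]
  simp

theorem commute_expSubOneDiv (x : 𝔸) : Commute x (expSubOneDiv x) :=
  .tsum_right _ fun k => ((Commute.self_pow x k).smul_right _)

variable [CompleteSpace 𝔸]

theorem summable_expSubOneDiv (x : 𝔸) : Summable fun k : ℕ => ((k + 1)! : ℂ)⁻¹ • x ^ k := by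
  refine .of_norm_bounded (norm_expSeries_summable' (𝕂 := ℂ) x) fun k => ?_
  rw [norm_smul, norm_smul]
  gcongr
  simp only [norm_inv, Complex.norm_natCast]
  gcongr
  exact k.le_succ

theorem mul_expSubOneDiv (x : 𝔸) : x * expSubOneDiv x = exp x - 1 := by
  simp only [exp_eq_tsum ℂ]
  rw [(expSeries_summable' x).tsum_eq_zero_add, expSubOneDiv,
    ← (summable_expSubOneDiv x).tsum_mul_left]
  simp [← pow_succ']

theorem Complex.exists_eq_two_pi_I_mul_of_expSubOneDiv_eq_zero {μ : ℂ} (h : expSubOneDiv μ = 0) :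
    ∃ k : ℤ, k ≠ 0 ∧ μ = 2 * Real.pi * I * k := by
  have hμ : μ ≠ 0 := by rintro rfl; simp [expSubOneDiv_zero] at h
  have hexp : Complex.exp μ = 1 := by
    rw [Complex.exp_eq_exp_ℂ, ← sub_eq_zero, ← mul_expSubOneDiv, h, mul_zero]
  obtain ⟨k, rfl⟩ := Complex.exp_eq_one_iff.mp hexp
  exact ⟨k, by rintro rfl; simp at hμ, by ring⟩

end ExpSubOneDiv

theorem Module.End.exists_hasEigenvector_mem_ker_of_commute {K V : Type*} [Field K]
    [IsAlgClosed K] [AddCommGroup V] [Module K V] [FiniteDimensional K V] {S T : End K V}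
    (hST : Commute S T) (hS : LinearMap.ker S ≠ ⊥) :
    ∃ μ v, T.HasEigenvector μ v ∧ S v = 0 := by
  have hmaps : ∀ v ∈ LinearMap.ker S, T v ∈ LinearMap.ker S := fun v hv => by
    rw [LinearMap.mem_ker] at hv ⊢
    rw [← Module.End.mul_apply, hST.eq, Module.End.mul_apply, hv, map_zero]
  have : Nontrivial (LinearMap.ker S) := Submodule.nontrivial_iff_ne_bot.mpr hS
  obtain ⟨μ, hμ⟩ := exists_eigenvalue (T.restrict hmaps)
  obtain ⟨v, hv, hv0⟩ := hμ.exists_hasEigenvector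
  exact ⟨μ, v, ⟨eigenspace_restrict_le_eigenspace T hmaps μ ⟨v, hv, rfl⟩, by simpa using hv0⟩,
    v.2⟩

theorem ContinuousLinearMap.apply_eq_zero_of_exp_apply_eq_self {E : Type*}
    [NormedAddCommGroup E] [NormedSpace ℂ E] [FiniteDimensional ℂ E] (T : E →L[ℂ] E)
    (hT : ∀ μ, Module.End.HasEigenvalue (T : E →ₗ[ℂ] E) μ →
      ∀ k : ℤ, k ≠ 0 → μ ≠ 2 * Real.pi * I * k)
    {x : E} (hx : exp T x = x) : T x = 0 := by
  by_contra hTx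
  have hker : expSubOneDiv T (T x) = 0 := by
    rw [← mul_apply_eq_comp, ← (commute_expSubOneDiv T).eq, mul_expSubOneDiv,
      _root_.sub_apply, hx, one_apply_eq_self, sub_self]
  obtain ⟨μ, v, hv, hφv⟩ := Module.End.exists_hasEigenvector_mem_ker_of_commute
    ((commute_expSubOneDiv T).symm.map toLinearMapRingHom)
    ((Submodule.ne_bot_iff _).mpr ⟨T x, hker, hTx⟩)
  have hφμ : expSubOneDiv μ = 0 := by
    have h := T.tsum_smul_pow_apply_eq _ (toSpanSingleton ℂ v)
      (fun k => by simpa [← toLinearMap_pow] using hv.pow_apply k)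
      (summable_expSubOneDiv T) (summable_expSubOneDiv μ)
    rw [← expSubOneDiv, ← expSubOneDiv, toSpanSingleton_apply] at h
    exact (smul_eq_zero.mp (h ▸ hφv)).resolve_right hv.2
  obtain ⟨k, hk, rfl⟩ := Complex.exists_eq_two_pi_I_mul_of_expSubOneDiv_eq_zero hφμ
  exact hT _ (Module.End.hasEigenvalue_of_hasEigenvector hv) k hk rfl

theorem SemiconjBy.aeval {R A : Type*} [CommSemiring R] [Semiring A] [Algebra R A] {a x y : A}
    (h : SemiconjBy a x y) (p : Polynomial R) :
    SemiconjBy a (Polynomial.aeval x p) (Polynomial.aeval y p) := by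
  induction p using Polynomial.induction_on' with
  | add p q hp hq => simpa only [map_add] using hp.add_right hq
  | monomial k c =>
    simpa only [Polynomial.aeval_monomial] using
      SemiconjBy.mul_right (Algebra.commute_algebraMap_right c a) (h.pow_right k)

theorem Matrix.exists_eq_sub_of_mul_sub_mul_eq_smul {K ι : Type*} [Field K] [IsAlgClosed K]
    [Fintype ι] [DecidableEq ι] {A X : Matrix ι ι K} {μ : K} (hX : X ≠ 0)
    (h : A * X - X * A = μ • X) : ∃ u ∈ spectrum K A, ∃ v ∈ spectrum K A, μ = u - v := by
  have : Nontrivial (Matrix ι ι K) := ⟨⟨X, 0, hX⟩⟩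
  set B := algebraMap K _ μ + A
  have hXB : SemiconjBy X B A := by
    rw [SemiconjBy, mul_add, Algebra.algebraMap_eq_smul_one, mul_smul_one, ← h, sub_add_cancel]
  have hnu : ¬IsUnit (Polynomial.aeval B A.charpoly) := fun hu =>
    hX (hu.mul_left_eq_zero.mp (by rw [(hXB.aeval _).eq, aeval_self_charpoly, zero_mul]))
  obtain ⟨ν, hνB, hν⟩ : (0 : K) ∈ (fun k => A.charpoly.eval k) '' spectrum K B := by
    rw [← spectrum.map_polynomial_aeval_of_nonempty B _
      (spectrum.nonempty_of_isAlgClosed_of_finiteDimensional K B)]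
    exact (spectrum.zero_mem_iff K).mpr hnu
  rw [← spectrum.singleton_add_eq] at hνB
  obtain ⟨_, rfl, v, hv, rfl⟩ := hνB
  exact ⟨_, Matrix.mem_spectrum_of_isRoot_charpoly hν, v, hv, by ring⟩

theorem commute_of_exp_eq_exp_of_hasEigenvalue_ad {𝔸 : Type*} [NormedRing 𝔸]
    [NormedAlgebra ℂ 𝔸] [FiniteDimensional ℂ 𝔸] {a b : 𝔸}
    (had : ∀ μ, Module.End.HasEigenvalue (ContinuousLinearMap.ad a : 𝔸 →ₗ[ℂ] 𝔸) μ →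
      ∀ k : ℤ, k ≠ 0 → μ ≠ 2 * Real.pi * I * k)
    (h : exp a = exp b) : Commute a b := by
  let +nondep : NormedAlgebra ℚ 𝔸 := .restrictScalars ℚ ℂ 𝔸
  have hfix : exp (ContinuousLinearMap.ad a) b = b := by
    rw [exp_ad_apply, h, ← ((Commute.refl b).exp_right).eq, ← h, mul_assoc,
      ← exp_add_of_commute (Commute.refl a).neg_right, add_neg_cancel, NormedSpace.exp_zero,
      mul_one]
  exact sub_eq_zero.mp ((ContinuousLinearMap.ad a).apply_eq_zero_of_exp_apply_eq_self had hfix)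

theorem Matrix.commute_of_exp_eq_exp {ι : Type*} [Fintype ι] [DecidableEq ι]
    {f g : Matrix ι ι ℂ}
    (hf : ∀ u ∈ spectrum ℂ f, ∀ v ∈ spectrum ℂ f, ∀ k : ℤ, k ≠ 0 → u - v ≠ 2 * Real.pi * I * k)
    (h : exp f = exp g) : Commute f g := by
  -- `exp` and `spectrum` do not depend on the norm, so any algebra norm will do.
  let _ : NormedRing (Matrix ι ι ℂ) := Matrix.linftyOpNormedRing
  let _ : NormedAlgebra ℂ (Matrix ι ι ℂ) := Matrix.linftyOpNormedAlgebra
  refine commute_of_exp_eq_exp_of_hasEigenvalue_ad ?_ h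
  intro μ hμ k hk hμk
  obtain ⟨X, hX, hX0⟩ := hμ.exists_hasEigenvector
  obtain ⟨u, hu, v, hv, rfl⟩ :=
    Matrix.exists_eq_sub_of_mul_sub_mul_eq_smul hX0 (Module.End.mem_eigenspace_iff.mp hX)
  exact hf u hu v hv k hk hμk

theorem stmt_5 {n : ℕ} (f g : Matrix (Fin n) (Fin n) ℂ)
    (hf : ∀ u ∈ spectrum ℂ f, ∀ v ∈ spectrum ℂ f,
      ∀ k : ℤ, k ≠ 0 → u - v ≠ 2 * Real.pi * I * k)
    (h : exp f = exp g) :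
    f * g = g * f :=
  (Matrix.commute_of_exp_eq_exp hf h).eq
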